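/- Let u ∈ ℝ with 0 < |u| < 1 and let (v_M) be a sequence of complex numbers with v_M = u² + O(M^{−1/2}). Then lim_{M→∞} e^{−2M v_M} · e_M(2M v_M) = 1, where e_M(γ) = Σ_{m=0}^{2M−2} γ^m/m!. -/

import Mathlib

/-!
Put `γ = 2M v_M` and `N = 2M - 1`. Then `e^{-γ} e_M(γ) - 1 = -e^{-γ} (e^γ - e_M(γ))` is controlled
by the tail of the exponential series at `x = ‖γ‖`, which a Chernoff-type comparison with the
series of `e^{x/b}` bounds by `b^N e^{x/b}` for every `0 < b ≤ 1`. Taking `b = a := u²` gives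
`|e^{-γ} e_M(γ) - 1| ≤ a^N e^{‖γ‖/a - Re γ}`, and since `v_M = a + O(M^{-1/2})` the exponent is
`2M (1 - a) + O(√M)`. The bound is therefore `exp (2M (log a + 1 - a) + O(√M))`, which tends to `0`
because `log a < a - 1` for `a ≠ 1`.
-/

open Filter BigOperators

/-- Partial sum of the exponential series up to degree `2M − 2`. -/
noncomputable def eTaylor (M : ℕ) (γ : ℂ) : ℂ :=
  ∑ m ∈ Finset.range (2 * M - 1), γ ^ m / (m.factorial : ℂ)

open Finset Real

theorem Real.exp_sub_sum_range_le_pow_mul_exp_div {x b : ℝ} (hx : 0 ≤ x) (hb0 : 0 < b)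
    (hb1 : b ≤ 1) (N : ℕ) :
    exp x - ∑ m ∈ range N, x ^ m / m.factorial ≤ b ^ N * exp (x / b) := by
  have hf : HasSum (fun m : ℕ => x ^ m / m.factorial) (exp x) :=
    exp_eq_exp_ℝ ▸ NormedSpace.expSeries_div_hasSum_exp x
  have hg : HasSum (fun m : ℕ => b ^ N * ((x / b) ^ m / m.factorial)) (b ^ N * exp (x / b)) :=
    (exp_eq_exp_ℝ ▸ NormedSpace.expSeries_div_hasSum_exp (x / b)).mul_left _
  have hterm (i : ℕ) : x ^ (i + N) / (i + N).factorial
      ≤ b ^ N * ((x / b) ^ (i + N) / (i + N).factorial) := by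
    have hpow : b ^ N * (x / b) ^ (i + N) = x ^ (i + N) / b ^ i := by
      rw [div_pow, pow_add b]; field_simp
    rw [← mul_div_assoc, hpow]
    gcongr
    exact le_div_self (by positivity) (by positivity) (pow_le_one₀ hb0.le hb1)
  calc exp x - ∑ m ∈ range N, x ^ m / m.factorial
      ≤ b ^ N * exp (x / b) - ∑ m ∈ range N, b ^ N * ((x / b) ^ m / m.factorial) :=
        hasSum_le hterm ((hasSum_nat_add_iff' N).2 hf) ((hasSum_nat_add_iff' N).2 hg)
    _ ≤ b ^ N * exp (x / b) := sub_le_self _ (by positivity)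

theorem Complex.norm_exp_neg_mul_sum_range_sub_one_le (z : ℂ) (N : ℕ) {b : ℝ} (hb0 : 0 < b)
    (hb1 : b ≤ 1) :
    ‖exp (-z) * ∑ m ∈ range N, z ^ m / m.factorial - 1‖ ≤ b ^ N * Real.exp (‖z‖ / b - z.re) := by
  have hinv : exp (-z) * exp z = 1 := by rw [← exp_add, neg_add_cancel, exp_zero]
  calc ‖exp (-z) * ∑ m ∈ range N, z ^ m / m.factorial - 1‖
      = Real.exp (-z.re) * ‖exp z - ∑ m ∈ range N, z ^ m / m.factorial‖ := by
        rw [← hinv, ← mul_sub, norm_mul, norm_exp, neg_re, norm_sub_rev]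
    _ ≤ Real.exp (-z.re) * (b ^ N * Real.exp (‖z‖ / b)) := by
        gcongr
        refine (norm_exp_sub_sum_le_exp_norm_sub_sum z N).trans ?_
        exact Real.exp_sub_sum_range_le_pow_mul_exp_div (norm_nonneg z) hb0 hb1 N
    _ = b ^ N * Real.exp (‖z‖ / b - z.re) := by
        rw [sub_eq_add_neg, Real.exp_add]; ring

theorem Complex.norm_div_sub_re_le (w : ℂ) {a : ℝ} (ha : 0 < a) :
    ‖w‖ / a - w.re ≤ 1 - a + (a⁻¹ + 1) * ‖w - a‖ := by
  have hnorm : ‖w‖ ≤ a + ‖w - a‖ := by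
    simpa [abs_of_pos ha] using norm_le_norm_add_norm_sub' w (a : ℂ)
  have hre : a - ‖w - a‖ ≤ w.re := by
    have := re_le_norm (a - w)
    rw [norm_sub_rev, sub_re, ofReal_re] at this
    linarith
  have hdiv : ‖w‖ / a ≤ 1 + a⁻¹ * ‖w - a‖ := by
    calc ‖w‖ / a ≤ (a + ‖w - a‖) / a := by gcongr
      _ = 1 + a⁻¹ * ‖w - a‖ := by field_simp
  linarith

theorem tendsto_exp_mul_add_mul_sqrt {L : ℝ} (hL : L < 0) (c : ℝ) :
    Tendsto (fun n : ℕ => exp (L * n + c * √n)) atTop (nhds 0) := by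
  have hsqrt : Tendsto (fun n : ℕ => √n) atTop atTop :=
    tendsto_sqrt_atTop.comp tendsto_natCast_atTop_atTop
  refine tendsto_exp_atBot.comp ((hsqrt.atTop_mul_atBot₀
    (tendsto_atBot_add_const_right _ c (hsqrt.const_mul_atTop_of_neg hL))).congr fun n => ?_)
  linear_combination L * mul_self_sqrt (Nat.cast_nonneg n)

theorem norm_exp_neg_mul_eTaylor_sub_one_le {a : ℝ} (ha0 : 0 < a) (ha1 : a ≤ 1) {M : ℕ}
    (hM : 1 ≤ M) (w : ℂ) :
    ‖Complex.exp (-(2 * M * w)) * eTaylor M (2 * M * w) - 1‖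
      ≤ a⁻¹ * exp (2 * (log a + 1 - a) * M + 2 * (a⁻¹ + 1) * (M * ‖w - a‖)) := by
  set γ := 2 * (M : ℂ) * w
  have hexponent : ‖γ‖ / a - γ.re ≤ 2 * M * (1 - a + (a⁻¹ + 1) * ‖w - a‖) := by
    have hγ : ‖γ‖ / a - γ.re = 2 * M * (‖w‖ / a - w.re) := by
      simp only [γ, Complex.norm_mul, Complex.norm_ofNat, RCLike.norm_natCast, Complex.mul_re,
        Complex.re_ofNat, Complex.natCast_re, Complex.im_ofNat, Complex.natCast_im, mul_zero,
        sub_zero, Complex.mul_im, zero_mul, add_zero]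
      ring
    rw [hγ]
    gcongr
    exact Complex.norm_div_sub_re_le w ha0
  have hpow : a ^ (2 * M - 1) = a⁻¹ * exp (2 * M * log a) := by
    rw [mul_comm _ (log a), ← rpow_def_of_pos ha0, show (2 * M : ℝ) = (2 * M : ℕ) by push_cast; rfl,
      rpow_natCast, pow_sub₀ a ha0.ne' (by omega), pow_one, mul_comm]
  calc ‖Complex.exp (-γ) * eTaylor M γ - 1‖ ≤ a ^ (2 * M - 1) * exp (‖γ‖ / a - γ.re) :=
        Complex.norm_exp_neg_mul_sum_range_sub_one_le γ (2 * M - 1) ha0 ha1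
    _ ≤ a ^ (2 * M - 1) * exp (2 * M * (1 - a + (a⁻¹ + 1) * ‖w - a‖)) := by gcongr
    _ = a⁻¹ * exp (2 * (log a + 1 - a) * M + 2 * (a⁻¹ + 1) * (M * ‖w - a‖)) := by
        rw [hpow, mul_assoc, ← exp_add]; ring_nf

theorem eTaylor_bulk_limit (u : ℝ) (hu0 : 0 < |u|) (hu1 : |u| < 1)
    (v : ℕ → ℂ)
    (hv : ∃ C : ℝ, ∃ M₀ : ℕ, ∀ M ≥ M₀,
      ‖v M - (u : ℂ) ^ 2‖ ≤ C / Real.sqrt M) :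
    Tendsto (fun M : ℕ =>
        Complex.exp (-(2 * (M : ℂ) * v M)) * eTaylor M (2 * (M : ℂ) * v M))
      atTop (nhds 1) := by
  obtain ⟨C, M₀, hC⟩ := hv
  set a : ℝ := u ^ 2
  have ha0 : 0 < a := by simpa [a, sq_abs] using pow_pos hu0 2
  have ha1 : a < 1 := by simpa [a, sq_abs] using pow_lt_one₀ (abs_nonneg u) hu1 two_ne_zero
  have hL : 2 * (log a + 1 - a) < 0 := by linarith [log_lt_sub_one_of_pos ha0 ha1.ne]
  have hbound := (tendsto_exp_mul_add_mul_sqrt hL (2 * (a⁻¹ + 1) * C)).const_mul a⁻¹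
  rw [mul_zero] at hbound
  rw [← tendsto_sub_nhds_zero_iff]
  refine squeeze_zero_norm' ?_ hbound
  filter_upwards [eventually_ge_atTop M₀, eventually_ge_atTop 1] with M hM₀ hM1
  refine (norm_exp_neg_mul_eTaylor_sub_one_le ha0 ha1.le hM1 (v M)).trans ?_
  have hvM : ‖v M - a‖ ≤ C / √M := by simpa [a] using hC M hM₀
  calc _ ≤ a⁻¹ * exp (2 * (log a + 1 - a) * M + 2 * (a⁻¹ + 1) * (M * (C / √M))) := by gcongr
    _ = a⁻¹ * exp (2 * (log a + 1 - a) * M + 2 * (a⁻¹ + 1) * C * √M) := by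
        rw [mul_div_left_comm, div_sqrt, mul_assoc _ C, mul_comm C]
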